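/- arXiv:nlin/0101051 — 5 statements merged into one kernel-verified Lean document; each statement's English description precedes it below -/
import Mathlib

section
/- Let K ≥ 1 and let X be an n-periodic configuration with density ρ = m(X,1,n)/n. Then for every x ∈ ℤ and every positive integer N, |m(X,x+1,x+N)/N − ρ| ≤ ρ(1 − ρ/K)·n/N. In particular, if 0 < ρ < K then X is (ρ,φ)-regular with the rate function φ(N) = ρ(1 − ρ/K)·n/N. -/
/-!
Write `N = q n + r` with `0 ≤ r < n`. A window of length `N` consists of `q` full periods, each
holding exactly `n ρ` particles, followed by a window of length `r` holding `P` particles, so the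
error `m − N ρ` equals `P − r ρ`. The lane capacity bounds `P` by `r K` and the rest of that
period, `n ρ − P`, by `(n − r) K`; hence `P − r ρ ≤ min (r (K − ρ), (n − r) ρ)` and
`r ρ − P ≤ min (r ρ, (n − r) (K − ρ))`. Bounding each minimum by a convex combination of its two
terms with weights `ρ / K` and `1 − ρ / K` gives `n ρ (1 − ρ / K)` in both cases.
-/

/-- A configuration on the `K`-lane road: at most `K` particles per site. -/
def IsConf (K : ℤ) (X : ℤ → ℤ) : Prop := ∀ x, 0 ≤ X x ∧ X x ≤ K

/-- A configuration is `n`-periodic if `X(x+n) = X(x)` for all `x`. -/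
def IsPeriodic (n : ℤ) (X : ℤ → ℤ) : Prop := ∀ x, X (x + n) = X x

/-- The number of particles `m(X,a,b) = Σ_{x=a}^{b} X(x)`. -/
noncomputable def msum (X : ℤ → ℤ) (a b : ℤ) : ℤ := ∑ x ∈ Finset.Icc a b, X x

/-- `X` is `(ρ,φ)`-regular: every window of length `N` has particle density
within `φ(N)` of `ρ`. -/
def IsRegularConf (ρ : ℝ) (φ : ℕ → ℝ) (X : ℤ → ℤ) : Prop :=
  ∀ (n : ℤ) (N : ℕ), 1 ≤ N → |(msum X (n + 1) (n + N) : ℝ) / N - ρ| ≤ φ N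

open Finset

theorem Finset.sum_Ioc_add_sum_Ioc {α M : Type*} [LinearOrder α] [LocallyFiniteOrder α]
    [AddCommMonoid M] (f : α → M) {a b c : α} (hab : a ≤ b) (hbc : b ≤ c) :
    ∑ x ∈ Ioc a b, f x + ∑ x ∈ Ioc b c, f x = ∑ x ∈ Ioc a c, f x := by
  rw [← sum_union (Ioc_disjoint_Ioc_of_le le_rfl), Ioc_union_Ioc_eq_Ioc hab hbc]

namespace Function.Periodic

variable {M : Type*} {f : ℤ → M} {n : ℤ}

theorem sum_Ioc_add_one_add [AddCancelCommMonoid M] (hf : Periodic f n) (hn : 0 ≤ n) (a : ℤ) :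
    ∑ x ∈ Ioc (a + 1) (a + 1 + n), f x = ∑ x ∈ Ioc a (a + n), f x := by
  have htop : ∑ x ∈ Ioc a (a + n + 1), f x = f (a + n + 1) + ∑ x ∈ Ioc a (a + n), f x := by
    rw [← Order.succ_eq_add_one, ← insert_Ioc_right_eq_Ioc_succ (by omega), sum_insert (by simp)]
  have hbot : ∑ x ∈ Ioc a (a + n + 1), f x = f (a + 1) + ∑ x ∈ Ioc (a + 1) (a + 1 + n), f x := by
    rw [← insert_Ioc_succ_left_eq_Ioc (by omega : a < a + n + 1), Order.succ_eq_add_one,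
      sum_insert (by simp), add_right_comm]
  rw [htop, add_right_comm, hf] at hbot
  exact (add_left_cancel hbot).symm

theorem sum_Ioc_add_eq [AddCancelCommMonoid M] (hf : Periodic f n) (hn : 0 ≤ n) (a : ℤ) :
    ∑ x ∈ Ioc a (a + n), f x = ∑ x ∈ Ioc 0 n, f x := by
  have hg : Periodic (fun a ↦ ∑ x ∈ Ioc a (a + n), f x) 1 := hf.sum_Ioc_add_one_add hn
  simpa using hg.int_mul_eq a

theorem sum_Ioc_add_nsmul [AddCancelCommMonoid M] (hf : Periodic f n) (hn : 0 ≤ n) (a : ℤ)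
    (q : ℕ) : ∑ x ∈ Ioc a (a + q * n), f x = q • ∑ x ∈ Ioc 0 n, f x := by
  induction q with
  | zero => simp
  | succ q ih =>
    have hqn : 0 ≤ (q : ℤ) * n := mul_nonneg q.cast_nonneg hn
    rw [← sum_Ioc_add_sum_Ioc f (by omega : a ≤ a + q * n) (by push_cast; nlinarith),
      ih, show a + ((q + 1 : ℕ) : ℤ) * n = a + q * n + n by push_cast; ring,
      hf.sum_Ioc_add_eq hn, succ_nsmul]

end Function.Periodic

namespace IsConf

variable {K : ℤ} {X : ℤ → ℤ}

theorem sum_Ioc_nonneg (hX : IsConf K X) (a b : ℤ) : 0 ≤ ∑ x ∈ Ioc a b, X x :=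
  sum_nonneg fun x _ ↦ (hX x).1

theorem sum_Ioc_le (hX : IsConf K X) {a b : ℤ} (hab : a ≤ b) :
    ∑ x ∈ Ioc a b, X x ≤ (b - a) * K := by
  calc ∑ x ∈ Ioc a b, X x ≤ ∑ _x ∈ Ioc a b, K := sum_le_sum fun x _ ↦ (hX x).2
    _ = (b - a) * K := by rw [sum_const, nsmul_eq_mul, Int.card_Ioc_of_le a b hab]

end IsConf

theorem msum_add_one (X : ℤ → ℤ) (a b : ℤ) : msum X (a + 1) b = ∑ x ∈ Ioc a b, X x := by
  rw [msum, ← Order.succ_eq_add_one, Icc_succ_left_eq_Ioc]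

theorem abs_sub_mul_le_of_capacity {K n r ρ P : ℝ} (hK : 0 < K) (hn : 0 < n) (hP : 0 ≤ P)
    (hPr : P ≤ r * K) (hPn : P ≤ n * ρ) (hrest : n * ρ - P ≤ (n - r) * K) :
    |P - r * ρ| ≤ ρ * (1 - ρ / K) * n := by
  have hρ : 0 ≤ ρ := by nlinarith
  have hρK : ρ ≤ K := by nlinarith
  have hbound : ρ * (1 - ρ / K) * n = n * ρ * (K - ρ) / K := by field_simp
  rw [hbound, abs_sub_le_iff, le_div_iff₀ hK, le_div_iff₀ hK]
  constructor
  · nlinarith [mul_nonneg hρ (by linarith : 0 ≤ r * K - P),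
      mul_nonneg (sub_nonneg.2 hρK) (by linarith : 0 ≤ n * ρ - P)]
  · nlinarith [mul_nonneg (sub_nonneg.2 hρK) hP,
      mul_nonneg hρ (by linarith : 0 ≤ (n - r) * K - n * ρ + P)]

theorem IsConf.abs_msum_sub_le {K n : ℤ} {X : ℤ → ℤ} (hK : 0 < K) (hn : 0 < n)
    (hX : IsConf K X) (hper : Function.Periodic X n) {ρ : ℝ} (hρ : n * ρ = msum X 1 n)
    (x : ℤ) (N : ℕ) : |(msum X (x + 1) (x + N) : ℝ) - N * ρ| ≤ ρ * (1 - ρ / K) * n := by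
  set S := ∑ y ∈ Ioc 0 n, X y
  rw [show msum X 1 n = S from msum_add_one X 0 n] at hρ
  obtain ⟨q, hq⟩ : ∃ q : ℕ, (q : ℤ) = N / n :=
    ⟨(N / n : ℤ).toNat, Int.toNat_of_nonneg (Int.ediv_nonneg N.cast_nonneg hn.le)⟩
  set r := (N : ℤ) % n
  have hr0 : 0 ≤ r := Int.emod_nonneg _ hn.ne'
  have hrn : r < n := Int.emod_lt_of_pos _ hn
  have hN : (N : ℤ) = q * n + r := by rw [hq]; linarith [Int.mul_ediv_add_emod (N : ℤ) n]
  set b := x + q * n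
  set P := ∑ y ∈ Ioc b (b + r), X y
  have hwindow : msum X (x + 1) (x + N) = q * S + P := by
    rw [msum_add_one, show x + N = b + r by omega,
      ← sum_Ioc_add_sum_Ioc X (by nlinarith : x ≤ b) (by omega), hper.sum_Ioc_add_nsmul hn.le,
      nsmul_eq_mul]
  have hperiod : P + ∑ y ∈ Ioc (b + r) (b + n), X y = S := by
    rw [sum_Ioc_add_sum_Ioc X (by omega) (by omega), hper.sum_Ioc_add_eq hn.le]
  have hPr : P ≤ r * K := by simpa using hX.sum_Ioc_le (by omega : b ≤ b + r)
  have hPS : P ≤ S := by linarith [hX.sum_Ioc_nonneg (b + r) (b + n)]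
  have hrest : S - P ≤ (n - r) * K := by
    linarith [hX.sum_Ioc_le (by omega : b + r ≤ b + n), show b + n - (b + r) = n - r by ring]
  have key := abs_sub_mul_le_of_capacity (K := K) (n := n) (r := r) (ρ := ρ) (P := P)
    (by exact_mod_cast hK) (by exact_mod_cast hn) (by exact_mod_cast hX.sum_Ioc_nonneg b (b + r))
    (by exact_mod_cast hPr) (by rw [hρ]; exact_mod_cast hPS) (by rw [hρ]; exact_mod_cast hrest)
  have hNR : (N : ℝ) = q * n + r := by exact_mod_cast hN
  convert key using 2
  rw [hwindow, hNR]
  push_cast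
  linear_combination (q : ℝ) * hρ.symm

/-- An `n`-periodic configuration of density `ρ` is `(ρ,φ)`-regular with the
rate function `φ(N) = ρ(1-ρ/K)·n/N`. -/
theorem stmt_1 (K n : ℤ) (hK : 1 ≤ K) (hn : 1 ≤ n) (X : ℤ → ℤ)
    (hX : IsConf K X) (hper : IsPeriodic n X) (ρ : ℝ)
    (hρ : ρ = (msum X 1 n : ℝ) / n) :
    (∀ (x : ℤ) (N : ℕ), 1 ≤ N →
        |(msum X (x + 1) (x + N) : ℝ) / N - ρ| ≤ ρ * (1 - ρ / K) * n / N) ∧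
    (0 < ρ → ρ < K →
        IsRegularConf ρ (fun N : ℕ => ρ * (1 - ρ / K) * n / N) X) := by
  have hn' : (0 : ℝ) < n := by exact_mod_cast hn
  have hnρ : n * ρ = msum X 1 n := by rw [hρ]; field_simp
  have window : ∀ (x : ℤ) (N : ℕ), 1 ≤ N →
      |(msum X (x + 1) (x + N) : ℝ) / N - ρ| ≤ ρ * (1 - ρ / K) * n / N := by
    intro x N hN
    have hN' : (0 : ℝ) < N := by exact_mod_cast hN
    have hdiv : (msum X (x + 1) (x + N) : ℝ) / N - ρ = (msum X (x + 1) (x + N) - N * ρ) / N := by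
      field_simp
    rw [hdiv, abs_div, abs_of_pos hN']
    exact div_le_div_of_nonneg_right (hX.abs_msum_sub_le (by omega) (by omega) hper hnρ x N) hN'.le
  exact ⟨window, fun _ _ ↦ window⟩
end

section
/- Let K ≥ 1 and let X be a configuration with a jammed cluster on the sites k+1,…,k+n with n ≥ 2. Then (TX)(k+n) + (TX)(k+n+1) = K; in particular the site k+n is free (not jammed) in the configuration TX. -/
/-- The traffic map `T`. -/
def Tmap (K : ℤ) (X : ℤ → ℤ) : ℤ → ℤ := fun x =>
  X x + min (X (x - 1)) (K - X x) - min (X x) (K - X (x + 1))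

/-- `X` has a jammed cluster on the sites `k+1, …, k+n`: each of these sites is
jammed (`X(x) + X(x+1) > K`) while the sites `k` and `k+n+1` are free. -/
def HasJammedCluster (K : ℤ) (X : ℤ → ℤ) (k n : ℤ) : Prop :=
  (∀ x ∈ Finset.Icc (k + 1) (k + n), K < X x + X (x + 1)) ∧
  X k + X (k + 1) ≤ K ∧ X (k + n + 1) + X (k + n + 2) ≤ K

/-!
Since site `k+n-1` is jammed, the flow into `k+n` fills it up to `K - m`, where `m` is the
flow from `k+n` to `k+n+1`; since site `k+n+1` is free, everything at `k+n+1` moves on, so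
only the incoming `m` stays there. Hence the two sites carry `K` particles after one step.
-/

theorem Tmap_eq_of_le_add_left {K : ℤ} {X : ℤ → ℤ} {x : ℤ} (h : K ≤ X (x - 1) + X x) :
    Tmap K X x = K - min (X x) (K - X (x + 1)) := by
  rw [Tmap, min_eq_right (a := X (x - 1)) (by omega)]
  ring

theorem Tmap_eq_of_add_right_le {K : ℤ} {X : ℤ → ℤ} {x : ℤ} (h : X x + X (x + 1) ≤ K) :
    Tmap K X x = min (X (x - 1)) (K - X x) := by
  rw [Tmap, min_eq_left (a := X x) (b := K - X (x + 1)) (by omega)]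
  ring

theorem Tmap_add_Tmap_succ_eq {K : ℤ} {X : ℤ → ℤ} {x : ℤ} (hjam : K ≤ X (x - 1) + X x)
    (hfree : X (x + 1) + X (x + 1 + 1) ≤ K) :
    Tmap K X x + Tmap K X (x + 1) = K := by
  rw [Tmap_eq_of_le_add_left hjam, Tmap_eq_of_add_right_le hfree, add_sub_cancel_right]
  ring

theorem stmt_7_general (K : ℤ) (X : ℤ → ℤ)
    (k n : ℤ) (hn : 2 ≤ n) (hjam : HasJammedCluster K X k n) :
    Tmap K X (k + n) + Tmap K X (k + n + 1) = K ∧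
    Tmap K X (k + n) + Tmap K X (k + n + 1) ≤ K := by
  obtain ⟨hjammed, -, hfree⟩ := hjam
  have hlast : K < X (k + n - 1) + X (k + n) := by
    simpa using hjammed (k + n - 1) (Finset.mem_Icc.mpr ⟨by omega, by omega⟩)
  have hsum := Tmap_add_Tmap_succ_eq hlast.le (by rwa [add_assoc (k + n) 1 1])
  exact ⟨hsum, hsum.le⟩

/-- For a jammed cluster of length `n ≥ 2`, after one step the site `k+n`
becomes free: `(TX)(k+n) + (TX)(k+n+1) = K`. -/
theorem stmt_7 (K : ℤ) (hK : 1 ≤ K) (X : ℤ → ℤ) (hX : IsConf K X)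
    (k n : ℤ) (hn : 2 ≤ n) (hjam : HasJammedCluster K X k n) :
    Tmap K X (k + n) + Tmap K X (k + n + 1) = K ∧
    Tmap K X (k + n) + Tmap K X (k + n + 1) ≤ K :=
  stmt_7_general K X k n hn hjam
end

section
/- Let K ≥ 1 and let X be a configuration with a jammed cluster on the sites k+1,…,k+n. Then (TX)(k) + (TX)(k+1) = X(k+1) + X(k+2) + min(X(k−1)+X(k)−K, 0), and if n ≥ 2 then Σ_{x=k}^{k+n−1} (TX)(x) = Σ_{x=k+1}^{k+n} X(x) + min(X(k−1)+X(k)−K, 0). In particular the number of particles in the jammed cluster cannot increase under the dynamics, and if X(k−1)+X(k) < K it decreases by at least K − X(k−1) − X(k) > 0 after one application of the map T. -/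
/-!
Write `T X x = X x + φ (x - 1) - φ x`, where `φ x = min (X x) (K - X (x + 1))` is the number of
particles jumping from `x` to `x + 1`. Summed over `k, …, m` this telescopes to the boundary
fluxes `φ (k - 1) - φ m`. If `m` is jammed then `φ m = K - X (m + 1)`, and as
`min (X (k - 1)) (K - X k) + X k - K = min (X (k - 1) + X k - K) 0`, the sites `k, …, m` of `T X`
hold the particles of the sites `k + 1, …, m + 1` of `X` up to this nonpositive correction.
-/

def flux (K : ℤ) (X : ℤ → ℤ) (x : ℤ) : ℤ := min (X x) (K - X (x + 1))

lemma Tmap_eq_flux (K : ℤ) (X : ℤ → ℤ) (x : ℤ) :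
    Tmap K X x = X x + (flux K X (x - 1) - flux K X x) := by
  simp only [Tmap, flux, sub_add_cancel]
  ring

lemma flux_of_jammed {K : ℤ} {X : ℤ → ℤ} {x : ℤ} (hx : K < X x + X (x + 1)) :
    flux K X x = K - X (x + 1) :=
  min_eq_right (by omega)

lemma msum_self (X : ℤ → ℤ) (a : ℤ) : msum X a a = X a := by
  simp [msum]

lemma msum_add_one_right (X : ℤ → ℤ) {a b : ℤ} (h : a ≤ b + 1) :
    msum X a (b + 1) = msum X a b + X (b + 1) := by
  rw [msum, msum, ← Finset.insert_Icc_right_eq_Icc_add_one h,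
    Finset.sum_insert (by simp), add_comm]

lemma msum_eq_add_msum_add_one (X : ℤ → ℤ) {a b : ℤ} (h : a ≤ b) :
    msum X a b = X a + msum X (a + 1) b := by
  rw [msum, msum, ← Finset.insert_Icc_add_one_left_eq_Icc h, Finset.sum_insert (by simp)]

lemma msum_Tmap (K : ℤ) (X : ℤ → ℤ) {a b : ℤ} (h : a - 1 ≤ b) :
    msum (Tmap K X) a b = msum X a b + (flux K X (a - 1) - flux K X b) := by
  induction b, h using Int.leInduction with
  | base => simp [msum]
  | succ b hb ih =>
    rw [msum_add_one_right _ (by omega), msum_add_one_right _ (by omega), ih, Tmap_eq_flux,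
      add_sub_cancel_right]
    ring

lemma msum_Tmap_of_jammed (K : ℤ) (X : ℤ → ℤ) {k m : ℤ} (hkm : k ≤ m)
    (hm : K < X m + X (m + 1)) :
    msum (Tmap K X) k m = msum X (k + 1) (m + 1) + min (X (k - 1) + X k - K) 0 := by
  have hshift : msum X k m + X (m + 1) = X k + msum X (k + 1) (m + 1) := by
    rw [← msum_add_one_right _ (by omega), msum_eq_add_msum_add_one _ (by omega)]
  rw [msum_Tmap K X (by omega), flux_of_jammed hm, flux, sub_add_cancel]
  omega

theorem stmt_8_general (K : ℤ) (X : ℤ → ℤ)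
    (k n : ℤ) (hn : 1 ≤ n) (hjam : HasJammedCluster K X k n) :
    Tmap K X k + Tmap K X (k + 1) =
      X (k + 1) + X (k + 2) + min (X (k - 1) + X k - K) 0 ∧
    (2 ≤ n →
      msum (Tmap K X) k (k + n - 1) =
        msum X (k + 1) (k + n) + min (X (k - 1) + X k - K) 0 ∧
      msum (Tmap K X) k (k + n - 1) ≤ msum X (k + 1) (k + n) ∧
      (X (k - 1) + X k < K →
        msum (Tmap K X) k (k + n - 1) ≤
          msum X (k + 1) (k + n) - (K - X (k - 1) - X k))) := by
  have hjammed := hjam.1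
  have hpair := msum_Tmap_of_jammed K X (k := k) (m := k + 1) (by omega)
    (hjammed (k + 1) (Finset.mem_Icc.2 ⟨le_rfl, by omega⟩))
  refine ⟨?_, fun hn2 => ?_⟩
  · rw [msum_add_one_right (Tmap K X) (a := k) (b := k) (by omega),
      msum_add_one_right X (a := k + 1) (b := k + 1) (by omega), msum_self, msum_self,
      add_assoc k 1 1] at hpair
    exact hpair
  · have hcluster := msum_Tmap_of_jammed K X (k := k) (m := k + n - 1) (by omega)
      (hjammed (k + n - 1) (Finset.mem_Icc.2 ⟨by omega, by omega⟩))
    rw [sub_add_cancel] at hcluster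
    refine ⟨hcluster, ?_, fun _ => ?_⟩ <;> rw [hcluster] <;> omega

/-- The number of particles in a jammed cluster cannot increase under the
dynamics, and decreases by at least `K - X(k-1) - X(k)` when this quantity is
positive. -/
theorem stmt_8 (K : ℤ) (hK : 1 ≤ K) (X : ℤ → ℤ) (hX : IsConf K X)
    (k n : ℤ) (hn : 1 ≤ n) (hjam : HasJammedCluster K X k n) :
    Tmap K X k + Tmap K X (k + 1) =
      X (k + 1) + X (k + 2) + min (X (k - 1) + X k - K) 0 ∧
    (2 ≤ n →
      msum (Tmap K X) k (k + n - 1) =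
        msum X (k + 1) (k + n) + min (X (k - 1) + X k - K) 0 ∧
      msum (Tmap K X) k (k + n - 1) ≤ msum X (k + 1) (k + n) ∧
      (X (k - 1) + X k < K →
        msum (Tmap K X) k (k + n - 1) ≤
          msum X (k + 1) (k + n) - (K - X (k - 1) - X k))) :=
  stmt_8_general K X k n hn hjam
end

section
/- Let K ≥ 1, let ρ ∈ (0, K] with ρ ≠ K/2, let φ be a strictly decreasing function on the positive integers with φ(N) → 0, and let X be a (ρ,φ)-regular configuration. Let N be a positive integer with φ(N) < |K/2 − ρ| and let t be an integer with 4t ≥ (N+1)². Put Y = T^t X. Then the average velocity of Y is well defined and equals min{1, K/ρ − 1}; that is, the limit lim_{n→∞} (Σ_{x=−n}^{n−1} min(Y(x), K−Y(x+1))) / (Σ_{x=−n}^{n−1} Y(x)) exists and equals min{1, K/ρ − 1}. -/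
/-- A configuration is free if `X(x) + X(x+1) ≤ K` for all `x`. -/
def IsFree (K : ℤ) (X : ℤ → ℤ) : Prop := ∀ x, X x + X (x + 1) ≤ K

open Finset Filter Topology

def bwdDiff (h : ℤ → ℤ) : ℤ → ℤ := fun x => h x - h (x - 1)

theorem msum_bwdDiff (h : ℤ → ℤ) {a b : ℤ} (hab : a - 1 ≤ b) :
    msum (bwdDiff h) a b = h b - h (a - 1) := by
  induction b, hab using Int.leInduction with
  | base => simp [msum]
  | succ b hab ih =>
    rw [msum, ← insert_Icc_right_eq_Icc_add_one (by omega), sum_insert (by simp), ← msum, ih,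
      bwdDiff, add_sub_cancel_right]
    ring

theorem exists_bwdDiff_eq (X : ℤ → ℤ) : ∃ h, bwdDiff h = X := by
  refine ⟨fun x => ∑ y ∈ Ioc 0 x, X y - ∑ y ∈ Ioc x 0, X y, funext fun x => ?_⟩
  rcases le_or_gt x 0 with hx | hx
  · rw [bwdDiff, Ioc_eq_empty (a := 0) (b := x) (by omega),
      Ioc_eq_empty (a := 0) (b := x - 1) (by omega),
      ← insert_Ioc_add_one_left_eq_Ioc (by omega : x - 1 < 0), sub_add_cancel,
      sum_insert (by simp)]
    ring
  · have hIoc := insert_Ioc_right_eq_Ioc_add_one_of_not_isMax (by omega : 0 ≤ x - 1) (not_isMax _)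
    rw [sub_add_cancel] at hIoc
    rw [bwdDiff, Ioc_eq_empty (a := x) (b := 0) (by omega),
      Ioc_eq_empty (a := x - 1) (b := 0) (by omega), ← hIoc, sum_insert (by simp)]
    ring

def heightStep (K : ℤ) (h : ℤ → ℤ) : ℤ → ℤ := fun x => max (h (x - 1)) (h (x + 1) - K)

theorem min_bwdDiff (K : ℤ) (h : ℤ → ℤ) (x : ℤ) :
    min (bwdDiff h x) (K - bwdDiff h (x + 1)) = h x - heightStep K h x := by
  simp only [bwdDiff, heightStep, add_sub_cancel_right]
  omega

theorem Tmap_bwdDiff (K : ℤ) (h : ℤ → ℤ) :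
    Tmap K (bwdDiff h) = bwdDiff (heightStep K h) := by
  funext x
  have hx := min_bwdDiff K h x
  have hx' := min_bwdDiff K h (x - 1)
  rw [sub_add_cancel] at hx'
  rw [Tmap, hx, hx']
  simp only [bwdDiff]
  ring

theorem Tmap_iterate_bwdDiff (K : ℤ) (h : ℤ → ℤ) (t : ℕ) :
    (Tmap K)^[t] (bwdDiff h) = bwdDiff ((heightStep K)^[t] h) :=
  ((Function.Semiconj.iterate_right (fun h => (Tmap_bwdDiff K h).symm) t) h).symm

section HeightBounds

variable {K : ℤ} {h : ℤ → ℤ}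

theorem iterate_heightStep_le (hX : IsConf K (bwdDiff h)) (t : ℕ) (x : ℤ) :
    (heightStep K)^[t] h x ≤ h x := by
  induction t generalizing x with
  | zero => rfl
  | succ t ih =>
    have h₁ := ih (x - 1)
    have h₂ := ih (x + 1)
    have hx := hX x
    have hx' := hX (x + 1)
    simp only [bwdDiff, add_sub_cancel_right] at hx hx'
    rw [Function.iterate_succ_apply', heightStep]
    omega

theorem sub_le_iterate_heightStep (hX : IsConf K (bwdDiff h)) (t : ℕ) (x : ℤ) :
    h x - t * K ≤ (heightStep K)^[t] h x := by
  induction t generalizing x with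
  | zero => simp
  | succ t ih =>
    have h₁ := ih (x - 1)
    have hx := (hX x).2
    rw [bwdDiff] at hx
    rw [Function.iterate_succ_apply', heightStep]
    push_cast
    linarith [le_max_left ((heightStep K)^[t] h (x - 1)) ((heightStep K)^[t] h (x + 1) - K)]

theorem abs_msum_iterate_sub_le (hX : IsConf K (bwdDiff h)) (t : ℕ) {a b : ℤ} (hab : a - 1 ≤ b) :
    |msum (bwdDiff ((heightStep K)^[t] h)) a b - msum (bwdDiff h) a b| ≤ t * K := by
  rw [msum_bwdDiff _ hab, msum_bwdDiff _ hab, abs_le]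
  have := iterate_heightStep_le hX t b
  have := iterate_heightStep_le hX t (a - 1)
  have := sub_le_iterate_heightStep hX t b
  have := sub_le_iterate_heightStep hX t (a - 1)
  constructor <;> linarith

end HeightBounds

/-- The sites reachable from `x` in exactly `t` steps of `±1`. -/
noncomputable def lightCone (t : ℕ) (x : ℤ) : Finset ℤ :=
  (Icc (x - t) (x + t)).filter fun y => Even (x + t - y)

theorem mem_lightCone {t : ℕ} {x y : ℤ} :
    y ∈ lightCone t x ↔ x - t ≤ y ∧ y ≤ x + t ∧ (x + t - y) % 2 = 0 := by
  simp only [lightCone, mem_filter, mem_Icc, Int.even_iff, and_assoc]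

theorem lightCone_nonempty (t : ℕ) (x : ℤ) : (lightCone t x).Nonempty :=
  ⟨x - t, mem_lightCone.2 (by omega)⟩

theorem lightCone_zero (x : ℤ) : lightCone 0 x = {x} := by
  ext y
  simp only [mem_lightCone, mem_singleton]
  omega

theorem lightCone_succ (t : ℕ) (x : ℤ) :
    lightCone (t + 1) x = lightCone t (x - 1) ∪ lightCone t (x + 1) := by
  ext y
  simp only [mem_union, mem_lightCone]
  push_cast
  omega

section ConeMax

variable {α : Type*} [LinearOrder α]

noncomputable def coneMax (t : ℕ) (f : ℤ → α) (x : ℤ) : α :=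
  (lightCone t x).sup' (lightCone_nonempty t x) f

theorem coneMax_zero (f : ℤ → α) (x : ℤ) : coneMax 0 f x = f x := by
  simp only [coneMax, lightCone_zero, sup'_singleton]

theorem coneMax_succ (t : ℕ) (f : ℤ → α) (x : ℤ) :
    coneMax (t + 1) f x = max (coneMax t f (x - 1)) (coneMax t f (x + 1)) := by
  simp only [coneMax, lightCone_succ, ← sup'_union]

theorem coneMax_succ_le_pred {f : ℤ → α} {N t : ℕ} (hf : ∀ z, f (z + N) ≤ f z) (hN : 1 ≤ N)
    (hNt : N ≤ t + 1) (x : ℤ) : coneMax t f (x + 1) ≤ coneMax t f (x - 1) := by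
  refine sup'_le _ _ fun y hy => ?_
  by_cases hy' : y ∈ lightCone t (x - 1)
  · exact le_sup' f hy'
  · -- `y` must be the tip `x + 1 + t`, and two `N`-steps back from it we are inside the cone
    obtain ⟨z, rfl⟩ : ∃ z, y = z + N + N := ⟨y - N - N, by ring⟩
    have hz : z ∈ lightCone t (x - 1) := by
      rw [mem_lightCone] at hy hy' ⊢
      omega
    exact ((hf _).trans (hf z)).trans (le_sup' f hz)

theorem coneMax_pred_le_succ {f : ℤ → α} {N t : ℕ} (hf : ∀ z, f z ≤ f (z + N)) (hN : 1 ≤ N)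
    (hNt : N ≤ t + 1) (x : ℤ) : coneMax t f (x - 1) ≤ coneMax t f (x + 1) := by
  refine sup'_le _ _ fun y hy => ?_
  by_cases hy' : y ∈ lightCone t (x + 1)
  · exact le_sup' f hy'
  · have hz : y + N + N ∈ lightCone t (x + 1) := by
      rw [mem_lightCone] at hy hy' ⊢
      omega
    exact ((hf y).trans (hf _)).trans (le_sup' f hz)

end ConeMax

theorem iterate_heightStep_eq_coneMax (K : ℤ) (h : ℤ → ℤ) (t : ℕ) (x : ℤ) :
    2 * (heightStep K)^[t] h x - K * x + K * t = coneMax t (fun y => 2 * h y - K * y) x := by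
  induction t generalizing x with
  | zero => simp [coneMax_zero]
  | succ t ih =>
    rw [coneMax_succ, ← ih, ← ih, Function.iterate_succ_apply', heightStep]
    grind

def IsJammed (K : ℤ) (X : ℤ → ℤ) : Prop := ∀ x, K ≤ X x + X (x + 1)

section FreeJammed

variable {K : ℤ} {h : ℤ → ℤ} {N t : ℕ}

theorem isFree_iterate_heightStep (hwin : ∀ y, 2 * (h (y + N) - h y) ≤ K * N) (hN : 1 ≤ N)
    (hNt : N ≤ t + 1) : IsFree K (bwdDiff ((heightStep K)^[t] h)) := by
  intro x
  have hcone := coneMax_succ_le_pred (f := fun y => 2 * h y - K * y)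
    (fun z => by linarith [hwin z]) hN hNt x
  rw [← iterate_heightStep_eq_coneMax, ← iterate_heightStep_eq_coneMax] at hcone
  simp only [bwdDiff, add_sub_cancel_right]
  linarith

theorem isJammed_iterate_heightStep (hwin : ∀ y, K * N ≤ 2 * (h (y + N) - h y)) (hN : 1 ≤ N)
    (hNt : N ≤ t + 1) : IsJammed K (bwdDiff ((heightStep K)^[t] h)) := by
  intro x
  have hcone := coneMax_pred_le_succ (f := fun y => 2 * h y - K * y)
    (fun z => by linarith [hwin z]) hN hNt x
  rw [← iterate_heightStep_eq_coneMax, ← iterate_heightStep_eq_coneMax] at hcone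
  simp only [bwdDiff, add_sub_cancel_right]
  linarith

end FreeJammed

section Regular

variable {ρ : ℝ} {φ : ℕ → ℝ} {N : ℕ}

theorem two_mul_sub_lt_of_isRegularConf {K : ℤ} {h : ℤ → ℤ}
    (hreg : IsRegularConf ρ φ (bwdDiff h)) (hN : 1 ≤ N) (hφ : φ N < K / 2 - ρ) (n : ℤ) :
    2 * (h (n + N) - h n) < K * N := by
  have hwin := (abs_le.1 (hreg n N hN)).2
  rw [msum_bwdDiff _ (by omega), add_sub_cancel_right, div_sub' (by positivity),
    div_le_iff₀ (by positivity)] at hwin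
  push_cast at hwin
  have : (2 * (h (n + N) - h n) : ℝ) < K * N := by
    linarith [mul_lt_mul_of_pos_right hφ (by positivity : (0 : ℝ) < N)]
  exact_mod_cast this

theorem lt_two_mul_sub_of_isRegularConf {K : ℤ} {h : ℤ → ℤ}
    (hreg : IsRegularConf ρ φ (bwdDiff h)) (hN : 1 ≤ N) (hφ : φ N < ρ - K / 2) (n : ℤ) :
    K * N < 2 * (h (n + N) - h n) := by
  have hwin := (abs_le.1 (hreg n N hN)).1
  rw [msum_bwdDiff _ (by omega), add_sub_cancel_right, div_sub' (by positivity),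
    le_div_iff₀ (by positivity)] at hwin
  push_cast at hwin
  have : (K * N : ℝ) < 2 * (h (n + N) - h n) := by
    linarith [mul_lt_mul_of_pos_right hφ (by positivity : (0 : ℝ) < N)]
  exact_mod_cast this

end Regular

theorem tendsto_msum_div_of_isRegularConf {ρ : ℝ} {φ : ℕ → ℝ} {X Y : ℤ → ℤ} {C : ℤ}
    (hreg : IsRegularConf ρ φ X) (hφ : Tendsto φ atTop (𝓝 0))
    (hC : ∀ a b, a - 1 ≤ b → |msum Y a b - msum X a b| ≤ C) (s : ℤ) :
    Tendsto (fun n : ℕ => (msum Y (s - n) (s + n - 1) : ℝ) / (2 * n)) atTop (𝓝 ρ) := by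
  have hbound : ∀ n : ℕ, 1 ≤ n →
      |(msum Y (s - n) (s + n - 1) : ℝ) / (2 * n) - ρ| ≤ C / (2 * n) + φ (2 * n) := by
    intro n hn
    have hpos : (0 : ℝ) < 2 * n := mul_pos two_pos (Nat.cast_pos.2 hn)
    have hX := hreg (s - n - 1) (2 * n) (by omega)
    have hXY : |(msum Y (s - n) (s + n - 1) - msum X (s - n) (s + n - 1) : ℝ)| ≤ C := by
      exact_mod_cast hC _ _ (by omega)
    rw [show s - n - 1 + 1 = s - n by ring, show s - (n : ℤ) - 1 + (2 * n : ℕ) = s + n - 1 by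
      push_cast; ring] at hX
    calc |(msum Y (s - n) (s + n - 1) : ℝ) / (2 * n) - ρ|
        = |(msum Y (s - n) (s + n - 1) - msum X (s - n) (s + n - 1) : ℝ) / (2 * n)
            + ((msum X (s - n) (s + n - 1) : ℝ) / (2 * n : ℕ) - ρ)| := by
          push_cast; ring_nf
      _ ≤ C / (2 * n) + φ (2 * n) := by
          refine (abs_add_le _ _).trans (add_le_add ?_ hX)
          rw [abs_div, abs_of_pos hpos]
          exact div_le_div_of_nonneg_right hXY hpos.le
  have hlim : Tendsto (fun n : ℕ => (C : ℝ) / (2 * n) + φ (2 * n)) atTop (𝓝 0) := by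
    have hC' : Tendsto (fun n : ℕ => (C / 2 : ℝ) / n) atTop (𝓝 0) :=
      tendsto_const_div_atTop_nhds_zero_nat _
    have hφ' : Tendsto (fun n : ℕ => φ (2 * n)) atTop (𝓝 0) :=
      hφ.comp (tendsto_id.const_mul_atTop' two_pos)
    simpa [div_div] using hC'.add hφ'
  rw [tendsto_iff_norm_sub_tendsto_zero]
  exact squeeze_zero_norm' (eventually_atTop.2 ⟨1, fun n hn => by simpa using hbound n hn⟩) hlim

noncomputable def averageVelocity (K : ℤ) (Y : ℤ → ℤ) (n : ℕ) : ℝ :=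
  ((∑ x ∈ Icc (-(n : ℤ)) (n - 1), min (Y x) (K - Y (x + 1)) : ℤ) : ℝ) / msum Y (-n) (n - 1)

section Velocity

variable {K : ℤ} {Y : ℤ → ℤ} {ρ : ℝ}

theorem tendsto_averageVelocity_of_isFree (hY : IsFree K Y) (hρ : 0 < ρ)
    (hdens : Tendsto (fun n : ℕ => (msum Y (-n) (n - 1) : ℝ) / (2 * n)) atTop (𝓝 ρ)) :
    Tendsto (averageVelocity K Y) atTop (𝓝 1) := by
  have hpos : ∀ᶠ n : ℕ in atTop, (0 : ℝ) < msum Y (-n) (n - 1) :=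
    (hdens.eventually (lt_mem_nhds hρ)).mono fun n hn =>
      lt_of_not_ge fun h => (div_nonpos_of_nonpos_of_nonneg h (by positivity)).not_gt hn
  refine tendsto_const_nhds.congr' (hpos.mono fun n hn => ?_)
  rw [averageVelocity, sum_congr rfl fun x _ => min_eq_left (by linarith [hY x])]
  exact (div_self hn.ne').symm

theorem tendsto_averageVelocity_of_isJammed (hY : IsJammed K Y) (hρ : ρ ≠ 0)
    (hdens : Tendsto (fun n : ℕ => (msum Y (-n) (n - 1) : ℝ) / (2 * n)) atTop (𝓝 ρ))
    (hdens' : Tendsto (fun n : ℕ => (msum Y (1 - n) n : ℝ) / (2 * n)) atTop (𝓝 ρ)) :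
    Tendsto (averageVelocity K Y) atTop (𝓝 (K / ρ - 1)) := by
  have hflux (n : ℕ) : ∑ x ∈ Icc (-(n : ℤ)) (n - 1), min (Y x) (K - Y (x + 1))
      = 2 * n * K - msum Y (1 - n) n := by
    have hshift : Icc (1 - n : ℤ) n = (Icc (-(n : ℤ)) (n - 1)).map (addRightEmbedding 1) := by
      rw [map_add_right_Icc]
      congr 1 <;> ring
    rw [sum_congr rfl fun x _ => min_eq_right (by linarith [hY x]), sum_sub_distrib, sum_const,
      Int.card_Icc, msum, hshift, sum_map]
    simp only [addRightEmbedding_apply]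
    rw [show (n - 1 + 1 - -n : ℤ).toNat = 2 * n by omega]
    ring
  have hlim : Tendsto (fun n : ℕ => (K - (msum Y (1 - n) n : ℝ) / (2 * n)) /
      ((msum Y (-n) (n - 1) : ℝ) / (2 * n))) atTop (𝓝 ((K - ρ) / ρ)) :=
    (tendsto_const_nhds.sub hdens').div hdens hρ
  rw [show (K : ℝ) / ρ - 1 = (K - ρ) / ρ by field_simp]
  refine hlim.congr' (eventually_atTop.2 ⟨1, fun n hn => ?_⟩)
  have hpos : (2 * n : ℝ) ≠ 0 := (mul_pos two_pos (Nat.cast_pos.2 hn)).ne'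
  rw [averageVelocity, hflux, sub_div' hpos, div_div_div_cancel_right₀ hpos]
  push_cast
  ring

end Velocity

theorem stmt_11_general (K : ℤ) (X : ℤ → ℤ) (hX : IsConf K X)
    (ρ : ℝ) (hρ0 : 0 < ρ) (hρhalf : ρ ≠ K / 2) (φ : ℕ → ℝ)
    (hφ0 : Filter.Tendsto φ Filter.atTop (nhds 0))
    (hreg : IsRegularConf ρ φ X)
    (N : ℕ) (hN : 1 ≤ N) (hNφ : φ N < |(K : ℝ) / 2 - ρ|)
    (t : ℕ) (ht : (N + 1) ^ 2 ≤ 4 * t)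
    (Y : ℤ → ℤ) (hY : Y = (Tmap K)^[t] X) :
    Filter.Tendsto
      (fun n : ℕ =>
        ((∑ x ∈ Finset.Icc (-(n : ℤ)) ((n : ℤ) - 1),
            min (Y x) (K - Y (x + 1)) : ℤ) : ℝ) /
        ((∑ x ∈ Finset.Icc (-(n : ℤ)) ((n : ℤ) - 1), Y x : ℤ) : ℝ))
      Filter.atTop (nhds (min 1 ((K : ℝ) / ρ - 1))) := by
  obtain ⟨h, rfl⟩ := exists_bwdDiff_eq X
  rw [Tmap_iterate_bwdDiff] at hY
  subst hY
  have hNt : N ≤ t + 1 := by nlinarith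
  have hdens := tendsto_msum_div_of_isRegularConf hreg hφ0
    (fun a b hab => abs_msum_iterate_sub_le hX t hab)
  rcases hρhalf.lt_or_gt with hlt | hgt
  · rw [abs_of_pos (by linarith)] at hNφ
    have hfree := isFree_iterate_heightStep
      (fun y => (two_mul_sub_lt_of_isRegularConf hreg hN hNφ y).le) hN hNt
    rw [min_eq_left (by rw [le_sub_iff_add_le, le_div_iff₀ hρ0]; linarith)]
    exact tendsto_averageVelocity_of_isFree hfree hρ0 (by simpa using hdens 0)
  · rw [abs_of_neg (by linarith), neg_sub] at hNφ
    have hjam := isJammed_iterate_heightStep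
      (fun y => (lt_two_mul_sub_of_isRegularConf hreg hN hNφ y).le) hN hNt
    rw [min_eq_right (by rw [sub_le_iff_le_add, div_le_iff₀ hρ0]; linarith)]
    exact tendsto_averageVelocity_of_isJammed hjam hρ0.ne' (by simpa using hdens 0)
      (by simpa [add_comm] using hdens 1)

/-- After the transient period, the average velocity of a regular configuration
of density `ρ ≠ K/2` is well defined and equals `min{1, K/ρ - 1}`. -/
theorem stmt_11 (K : ℤ) (hK : 1 ≤ K) (X : ℤ → ℤ) (hX : IsConf K X)
    (ρ : ℝ) (hρ0 : 0 < ρ) (hρK : ρ ≤ K) (hρhalf : ρ ≠ K / 2) (φ : ℕ → ℝ)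
    (hφanti : StrictAntiOn φ (Set.Ici 1))
    (hφ0 : Filter.Tendsto φ Filter.atTop (nhds 0))
    (hreg : IsRegularConf ρ φ X)
    (N : ℕ) (hN : 1 ≤ N) (hNφ : φ N < |(K : ℝ) / 2 - ρ|)
    (t : ℕ) (ht : (N + 1) ^ 2 ≤ 4 * t)
    (Y : ℤ → ℤ) (hY : Y = (Tmap K)^[t] X) :
    Filter.Tendsto
      (fun n : ℕ =>
        ((∑ x ∈ Finset.Icc (-(n : ℤ)) ((n : ℤ) - 1),
            min (Y x) (K - Y (x + 1)) : ℤ) : ℝ) /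
        ((∑ x ∈ Finset.Icc (-(n : ℤ)) ((n : ℤ) - 1), Y x : ℤ) : ℝ))
      Filter.atTop (nhds (min 1 ((K : ℝ) / ρ - 1))) :=
  stmt_11_general K X hX ρ hρ0 hρhalf φ hφ0 hreg N hN hNφ t ht Y hY
end

section
/- Let K ≥ 1, let n ≥ 1, and let X be a 2n-periodic configuration with density ρ = m(X,1,2n)/(2n). Then for every integer t ≥ n: if ρ ≤ K/2 then T^t X is free, and if ρ ≥ K/2 then the dual configuration (T^t X)* is free (equivalently, (T^t X)(x)+(T^t X)(x+1) ≥ K for all x ∈ ℤ). -/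
/-- The dual configuration `X*(x) = K - X(x)`, describing empty places. -/
def dualConf (K : ℤ) (X : ℤ → ℤ) : ℤ → ℤ := fun x => K - X x

/-!
Write a configuration as the backward difference `X x = h x - h (x - 1)` of its height
function `h`. One step of the traffic map then becomes the max-plus linear recursion
`h' x = max (h (x - 1)) (h (x + 1) - K)`, whose iterates obey the Hopf–Lax formula
`h_t x = max_{0 ≤ j ≤ t} (h (x - t + 2j) - j K)`. A `2n`-periodic configuration with `m`
particles per period has `h (x + 2n) = h x + m`. Comparing the maximisers of `h_t` at `x + 1`
and at `x - 1` (the index `j` shifts by one, or by `n` across a period) gives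
`h_t (x + 1) - h_t (x - 1) ≤ K` when `m ≤ n K`, and `≥ K` when `m ≥ n K`, once `t + 1 ≥ n`.
-/

noncomputable def height (X : ℤ → ℤ) (x : ℤ) : ℤ :=
  (∑ y ∈ Finset.Icc 1 x, X y) - ∑ y ∈ Finset.Icc (x + 1) 0, X y

def backDiff (H : ℤ → ℤ) (x : ℤ) : ℤ := H x - H (x - 1)

def maxPlusStep (K : ℤ) (H : ℤ → ℤ) (x : ℤ) : ℤ := max (H (x - 1)) (H (x + 1) - K)

section Height

variable (X : ℤ → ℤ)

@[simp]
lemma height_zero : height X 0 = 0 := by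
  simp [height]

lemma height_add_one (x : ℤ) : height X (x + 1) = height X x + X (x + 1) := by
  unfold height
  rcases le_or_gt 0 x with hx | hx
  · rw [Finset.Icc_eq_empty_of_lt (show 0 < x + 1 by omega),
      Finset.Icc_eq_empty_of_lt (show 0 < x + 1 + 1 by omega),
      ← Finset.insert_Icc_right_eq_Icc_add_one (by omega), Finset.sum_insert (by simp)]
    ring
  · rw [Finset.Icc_eq_empty_of_lt (show x < 1 by omega),
      Finset.Icc_eq_empty_of_lt (show x + 1 < 1 by omega),
      ← Finset.insert_Icc_add_one_left_eq_Icc (show x + 1 ≤ 0 by omega),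
      Finset.sum_insert (by simp)]
    ring

@[simp]
lemma backDiff_height : backDiff (height X) = X := by
  funext x
  have h := height_add_one X (x - 1)
  rw [sub_add_cancel] at h
  rw [backDiff, h]
  ring

lemma height_eq_msum {b : ℤ} (hb : 0 ≤ b) : height X b = msum X 1 b := by
  simp [height, msum, Finset.Icc_eq_empty_of_lt (show b + 1 > 0 by omega)]

lemma height_add_period {p : ℤ} (hX : IsPeriodic p X) (x : ℤ) :
    height X (x + p) = height X x + height X p := by
  induction x using Int.induction_on with
  | zero => simp
  | succ i ih =>
    have h := height_add_one X (i + p)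
    rw [add_right_comm, hX] at h
    rw [h, ih, height_add_one]
    ring
  | pred i ih =>
    have h := height_add_one X (-i - 1 + p)
    rw [add_right_comm, sub_add_cancel, hX, ih] at h
    have h' := height_add_one X (-i - 1)
    rw [sub_add_cancel] at h'
    linarith

end Height

lemma backDiff_add_backDiff_add_one (H : ℤ → ℤ) (x : ℤ) :
    backDiff H x + backDiff H (x + 1) = H (x + 1) - H (x - 1) := by
  simp only [backDiff, add_sub_cancel_right]
  ring

lemma isFree_dualConf_iff {K : ℤ} {Y : ℤ → ℤ} :
    IsFree K (dualConf K Y) ↔ ∀ x, K ≤ Y x + Y (x + 1) := by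
  simp only [IsFree, dualConf]
  exact forall_congr' fun x => by omega

section MaxPlus

variable (K : ℤ) (H : ℤ → ℤ)

lemma Tmap_backDiff : Tmap K (backDiff H) = backDiff (maxPlusStep K H) := by
  funext x
  simp only [Tmap, backDiff, maxPlusStep, sub_add_cancel, add_sub_cancel_right]
  omega

lemma iterate_Tmap_backDiff (t : ℕ) :
    (Tmap K)^[t] (backDiff H) = backDiff ((maxPlusStep K)^[t] H)  := by
  have hconj : Function.Semiconj backDiff (maxPlusStep K) (Tmap K) :=
    fun H => (Tmap_backDiff K H).symm
  exact ((hconj.iterate_right t).eq H).symm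

lemma le_iterate_maxPlusStep {t : ℕ} {x y j : ℤ} (hj₀ : 0 ≤ j) (hjt : j ≤ t)
    (hy : x - t + 2 * j = y) : H y - j * K ≤ (maxPlusStep K)^[t] H x := by
  induction t generalizing x j with
  | zero =>
    obtain rfl : j = 0 := by omega
    subst hy
    simp
  | succ t ih =>
    rw [Function.iterate_succ_apply', maxPlusStep]
    rcases lt_or_eq_of_le hjt with hj | rfl
    · exact le_max_of_le_left (ih hj₀ (by omega) (by push_cast at hy ⊢; linarith))
    · refine le_max_of_le_right ?_
      have := ih (x := x + 1) (j := t) (by omega) le_rfl (by push_cast at hy ⊢; linarith)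
      push_cast
      linarith

lemma exists_iterate_maxPlusStep_eq (t : ℕ) (x : ℤ) :
    ∃ j : ℤ, 0 ≤ j ∧ j ≤ t ∧ (maxPlusStep K)^[t] H x = H (x - t + 2 * j) - j * K := by
  induction t generalizing x with
  | zero => exact ⟨0, le_rfl, le_rfl, by simp⟩
  | succ t ih =>
    rw [Function.iterate_succ_apply', maxPlusStep]
    rcases le_total (((maxPlusStep K)^[t] H) (x + 1) - K) ((maxPlusStep K)^[t] H (x - 1))
      with h | h
    · obtain ⟨j, hj₀, hjt, he⟩ := ih (x - 1)
      refine ⟨j, hj₀, by omega, ?_⟩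
      rw [max_eq_left h, he]
      push_cast
      ring_nf
    · obtain ⟨j, hj₀, hjt, he⟩ := ih (x + 1)
      refine ⟨j + 1, by omega, by omega, ?_⟩
      rw [max_eq_right h, he]
      push_cast
      ring_nf

variable {K H} {m n : ℤ} {t : ℕ}

lemma isFree_backDiff_iterate_maxPlusStep (hH : ∀ x, H (x + 2 * n) = H x + m) (hn : 1 ≤ n)
    (ht : n ≤ t + 1) (hm : m ≤ n * K) :
    IsFree K (backDiff ((maxPlusStep K)^[t] H)) := by
  intro x
  rw [backDiff_add_backDiff_add_one]
  obtain ⟨j, hj₀, hjt, he⟩ := exists_iterate_maxPlusStep_eq K H t (x + 1)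
  rcases lt_or_eq_of_le hjt with hj | rfl
  · have := le_iterate_maxPlusStep K H (t := t) (x := x - 1) (y := x + 1 - t + 2 * j)
      (j := j + 1) (by omega) (by omega) (by ring)
    linarith
  · have := le_iterate_maxPlusStep K H (t := t) (x := x - 1) (y := x + 1 + t - 2 * n)
      (j := t + 1 - n) (by omega) (by omega) (by ring)
    have hp := hH (x + 1 + t - 2 * n)
    rw [sub_add_cancel] at hp
    rw [show x + 1 - t + 2 * t = x + 1 + t by ring] at he
    linarith

lemma isFree_dualConf_backDiff_iterate_maxPlusStep (hH : ∀ x, H (x + 2 * n) = H x + m)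
    (hn : 1 ≤ n) (ht : n ≤ t + 1) (hm : n * K ≤ m) :
    IsFree K (dualConf K (backDiff ((maxPlusStep K)^[t] H))) := by
  refine isFree_dualConf_iff.mpr fun x => ?_
  rw [backDiff_add_backDiff_add_one]
  obtain ⟨j, hj₀, hjt, he⟩ := exists_iterate_maxPlusStep_eq K H t (x - 1)
  rcases lt_or_eq_of_le hj₀ with hj | rfl
  · have := le_iterate_maxPlusStep K H (t := t) (x := x + 1) (y := x - 1 - t + 2 * j)
      (j := j - 1) (by omega) (by omega) (by ring)
    linarith
  · have := le_iterate_maxPlusStep K H (t := t) (x := x + 1) (y := x - 1 - t + 2 * n)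
      (j := n - 1) (by omega) (by omega) (by ring)
    have hp := hH (x - 1 - t)
    rw [mul_zero, add_zero] at he
    linarith

end MaxPlus

theorem stmt_12_general (K : ℤ) (n : ℕ) (hn : 1 ≤ n) (X : ℤ → ℤ)
    (hper : IsPeriodic (2 * n) X) (ρ : ℝ)
    (hρ : ρ = (msum X 1 (2 * n) : ℝ) / (2 * n)) :
    ∀ t : ℕ, n ≤ t →
      (ρ ≤ (K : ℝ) / 2 → IsFree K ((Tmap K)^[t] X)) ∧
      ((K : ℝ) / 2 ≤ ρ →
        IsFree K (dualConf K ((Tmap K)^[t] X)) ∧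
        ∀ x : ℤ, K ≤ (Tmap K)^[t] X x + (Tmap K)^[t] X (x + 1)) := by
  intro t ht
  set m := msum X 1 (2 * n)
  have hH : ∀ x, height X (x + 2 * n) = height X x + m := fun x => by
    rw [height_add_period X hper, height_eq_msum X (b := 2 * n) (by positivity)]
  have hn' : (1 : ℤ) ≤ n := by exact_mod_cast hn
  have ht' : (n : ℤ) ≤ t + 1 := by omega
  have h2n : (0 : ℝ) < 2 * n := by positivity
  rw [← backDiff_height X, iterate_Tmap_backDiff]
  refine ⟨fun hlow => isFree_backDiff_iterate_maxPlusStep hH hn' ht' ?_, fun hhigh => ?_⟩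
  · rw [hρ, div_le_div_iff₀ h2n two_pos] at hlow
    exact_mod_cast (by linarith : (m : ℝ) ≤ n * K)
  · have hm : (n : ℤ) * K ≤ m := by
      rw [hρ, div_le_div_iff₀ two_pos h2n] at hhigh
      exact_mod_cast (by linarith : (n : ℝ) * K ≤ m)
    have hfree := isFree_dualConf_backDiff_iterate_maxPlusStep hH hn' ht' hm
    exact ⟨hfree, isFree_dualConf_iff.mp hfree⟩

/-- A `2n`-periodic configuration reaches its steady state after at most `n`
iterations. -/
theorem stmt_12 (K : ℤ) (hK : 1 ≤ K) (n : ℕ) (hn : 1 ≤ n) (X : ℤ → ℤ)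
    (hX : IsConf K X) (hper : IsPeriodic (2 * n) X) (ρ : ℝ)
    (hρ : ρ = (msum X 1 (2 * n) : ℝ) / (2 * n)) :
    ∀ t : ℕ, n ≤ t →
      (ρ ≤ (K : ℝ) / 2 → IsFree K ((Tmap K)^[t] X)) ∧
      ((K : ℝ) / 2 ≤ ρ →
        IsFree K (dualConf K ((Tmap K)^[t] X)) ∧
        ∀ x : ℤ, K ≤ (Tmap K)^[t] X x + (Tmap K)^[t] X (x + 1)) :=
  stmt_12_general K n hn X hper ρ hρ
end
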